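/- arXiv:0912.4708 — 2 statements merged into one kernel-verified Lean document; each statement's English description precedes it below -/
import Mathlib

section
/- Let R be a local ring with maximal ideal m satisfying m² = 0 and m = Rx = xR for every nonzero x in m. Then for every nonzero x ∈ m, there is a well-defined ring automorphism σ_x of the residue skew field d = R/m characterized by the property that x·t̃ = σ_x(t)~ · x for all t ∈ d, where t̃ denotes any lift of t to R. -/
/-!
Both the left and the right annihilator of `x` equal `m = ker π` (since `m x = x m = 0` and
`x ≠ 0`), and `Rx = xR`. For every `t` choose `φ t` with `x * t = φ t * x`; as `φ t` is determined
modulo the left annihilator of `x`, `t ↦ π (φ t)` is a ring homomorphism `R → D`, and it kills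
`m` because `x m = 0`. It therefore descends to `σ : D → D`, which is injective because the right
annihilator of `x` is `m`, and surjective because `Rx ⊆ xR`.
-/

theorem mul_left_eq_zero_iff_mem_nonunits {M : Type*} [MonoidWithZero M] {x : M}
    (hm : ∀ s ∈ nonunits M, s * x = 0) (hx0 : x ≠ 0) (s : M) : s * x = 0 ↔ s ∈ nonunits M :=
  ⟨fun h hs => hx0 (hs.mul_right_eq_zero.mp h), hm s⟩

theorem mul_right_eq_zero_iff_mem_nonunits {M : Type*} [MonoidWithZero M] {x : M}
    (hm : ∀ t ∈ nonunits M, x * t = 0) (hx0 : x ≠ 0) (t : M) : x * t = 0 ↔ t ∈ nonunits M :=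
  ⟨fun h ht => hx0 (ht.mul_left_eq_zero.mp h), hm t⟩

namespace RingHom

variable {R D : Type*} [Ring R] [Ring D] (π : R →+* D) {x : R}

theorem map_eq_map_iff_mul_eq_mul (hleft : ∀ s, π s = 0 ↔ s * x = 0) {s s' : R} :
    π s = π s' ↔ s * x = s' * x := by
  rw [← sub_eq_zero, ← map_sub, hleft, sub_mul, sub_eq_zero]

theorem map_eq_of_mul_eq_mul (hleft : ∀ s, π s = 0 ↔ s * x = 0) {φ : R → R}
    (hφ : ∀ t, x * t = φ t * x) {t s : R} (h : x * t = s * x) : π (φ t) = π s :=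
  (map_eq_map_iff_mul_eq_mul π hleft).mpr ((hφ t).symm.trans h)

variable (hleft : ∀ s, π s = 0 ↔ s * x = 0) {φ : R → R} (hφ : ∀ t, x * t = φ t * x)

def twist : R →+* D where
  toFun t := π (φ t)
  map_one' := (map_eq_of_mul_eq_mul π hleft hφ (s := 1) (by simp)).trans π.map_one
  map_mul' t₁ t₂ := by
    refine (map_eq_of_mul_eq_mul π hleft hφ ?_).trans (map_mul ..)
    rw [← mul_assoc, hφ t₁, mul_assoc, hφ t₂, mul_assoc]
  map_zero' := (map_eq_of_mul_eq_mul π hleft hφ (s := 0) (by simp)).trans π.map_zero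
  map_add' t₁ t₂ := by
    refine (map_eq_of_mul_eq_mul π hleft hφ ?_).trans (map_add ..)
    rw [mul_add, add_mul, hφ t₁, hφ t₂]

theorem ker_le_ker_twist (hright : ∀ t, π t = 0 ↔ x * t = 0) :
    ker π ≤ ker (π.twist hleft hφ) := by
  intro t ht
  have hxt : x * t = 0 * x := by rw [zero_mul, ← hright, ← mem_ker]; exact ht
  exact (map_eq_of_mul_eq_mul π hleft hφ hxt).trans π.map_zero

variable {π} (hπ : Function.Surjective π) (hright : ∀ t, π t = 0 ↔ x * t = 0)

noncomputable def twistHom : D →+* D :=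
  π.liftOfSurjective hπ ⟨π.twist hleft hφ, ker_le_ker_twist π hleft hφ hright⟩

theorem twistHom_map (t : R) : twistHom hleft hφ hπ hright (π t) = π (φ t) :=
  liftOfSurjective_comp_apply ..

theorem twistHom_bijective (hRx : ∀ s, ∃ t, x * t = s * x) :
    Function.Bijective (twistHom hleft hφ hπ hright) := by
  constructor
  · refine (injective_iff_map_eq_zero _).mpr fun d hd => ?_
    obtain ⟨t, rfl⟩ := hπ d
    rwa [twistHom_map, hleft, ← hφ, ← hright] at hd
  · intro d
    obtain ⟨s, rfl⟩ := hπ d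
    obtain ⟨t, ht⟩ := hRx s
    rw [← map_eq_of_mul_eq_mul π hleft hφ ht, ← twistHom_map hleft hφ hπ hright]
    exact ⟨π t, rfl⟩

end RingHom

theorem RingHom.existsUnique_ringEquiv_mul_eq_mul {R D : Type*} [Ring R] [Ring D] {π : R →+* D}
    (hπ : Function.Surjective π) {x : R} (hleft : ∀ s, π s = 0 ↔ s * x = 0)
    (hright : ∀ t, π t = 0 ↔ x * t = 0) (hxR : ∀ t, ∃ s, x * t = s * x)
    (hRx : ∀ s, ∃ t, x * t = s * x) :
    ∃! σ : D ≃+* D, ∀ t s : R, π s = σ (π t) → x * t = s * x := by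
  choose φ hφ using hxR
  let σ := RingEquiv.ofBijective _ (twistHom_bijective hleft hφ hπ hright hRx)
  have hσ (t : R) : σ (π t) = π (φ t) := twistHom_map hleft hφ hπ hright t
  refine ⟨σ, fun t s hs => ?_, fun σ' hσ' => ?_⟩
  · rw [hσ, map_eq_map_iff_mul_eq_mul π hleft] at hs
    rw [hs, hφ]
  · ext d
    obtain ⟨t, rfl⟩ := hπ d
    obtain ⟨s, hs⟩ := hπ (σ' (π t))
    rw [← hs, hσ, map_eq_of_mul_eq_mul π hleft hφ (hσ' t s hs)]

theorem residue_automorphism_exists_unique_general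
    {R : Type*} [Ring R]
    (hsq : ∀ a b : R, a ∈ nonunits R → b ∈ nonunits R → a * b = 0)
    (hgen : ∀ x : R, x ∈ nonunits R → x ≠ 0 →
      (∀ a : R, a ∈ nonunits R ↔ ∃ r : R, a = r * x) ∧
      (∀ a : R, a ∈ nonunits R ↔ ∃ r : R, a = x * r))
    {D : Type*} [DivisionRing D] (π : R →+* D) (hπ : Function.Surjective π)
    (hker : ∀ r : R, π r = 0 ↔ r ∈ nonunits R)
    (x : R) (hx : x ∈ nonunits R) (hx0 : x ≠ 0) :
    ∃! σ : D ≃+* D, ∀ t s : R, π s = σ (π t) → x * t = s * x := by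
  obtain ⟨hRx, hxR⟩ := hgen x hx hx0
  refine RingHom.existsUnique_ringEquiv_mul_eq_mul hπ (fun s => ?_) (fun t => ?_)
    (fun t => (hRx _).mp ((hxR _).mpr ⟨t, rfl⟩))
    (fun s => ((hxR _).mp ((hRx _).mpr ⟨s, rfl⟩)).imp fun _ => Eq.symm)
  · rw [hker, mul_left_eq_zero_iff_mem_nonunits (fun s hs => hsq s x hs hx) hx0]
  · rw [hker, mul_right_eq_zero_iff_mem_nonunits (fun t ht => hsq x t hx ht) hx0]

/-- Let `R` be a local ring whose maximal ideal `m` (the set of nonunits) satisfies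
`m² = 0` and `m = Rx = xR` for every nonzero `x ∈ m`.  Then for every nonzero `x ∈ m`
there is a unique (well-defined) ring automorphism `σ` of the residue skew field
`d = R/m` (here presented as a division ring `D` with a surjection `π : R → D`
whose kernel is `m`) characterized by `x * t̃ = σ(t)~ * x` for all `t ∈ d` and all
lifts `t̃` of `t` and `σ(t)~` of `σ(t)`. -/
theorem residue_automorphism_exists_unique
    {R : Type*} [Ring R] [IsLocalRing R]
    (hsq : ∀ a b : R, a ∈ nonunits R → b ∈ nonunits R → a * b = 0)
    (hgen : ∀ x : R, x ∈ nonunits R → x ≠ 0 →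
      (∀ a : R, a ∈ nonunits R ↔ ∃ r : R, a = r * x) ∧
      (∀ a : R, a ∈ nonunits R ↔ ∃ r : R, a = x * r))
    {D : Type*} [DivisionRing D] (π : R →+* D) (hπ : Function.Surjective π)
    (hker : ∀ r : R, π r = 0 ↔ r ∈ nonunits R)
    (x : R) (hx : x ∈ nonunits R) (hx0 : x ≠ 0) :
    ∃! σ : D ≃+* D, ∀ t s : R, π s = σ (π t) → x * t = s * x :=
  residue_automorphism_exists_unique_general hsq hgen π hπ hker x hx hx0
end

section
/- Let R be a local ring with maximal ideal m satisfying m² = 0 and m = Rx = xR for all nonzero x ∈ m. If x and y are nonzero elements of m with y = x·r̃ for some unit r̃ lifting r ∈ d = R/m, then the automorphisms σ_x, σ_y of d (defined by x·t̃ ≡ σ_x(t)~·x mod m²) satisfy σ_y(t) = σ_x(r)·σ_x(t)·σ_x(r)⁻¹ for all t ∈ d. In particular, if d is commutative, then σ_x = σ_y for all nonzero x, y ∈ m. -/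
/-!
Write `y = x * c` with `c` a unit lifting `r`, and let `t, s', u` lift `t̄, σ_y(t̄), σ_x(r)`.
Then `x * (c * t) = y * t = s' * y = s' * x * c = (s' * u) * x`. An identity `x * t = s * x`
already forces `π s = σ_x(π t)`: every element outside `ker π` is a unit and a unit does not
kill `x ≠ 0`. So `σ_y(t̄) σ_x(r) = π (s' * u) = σ_x(r t̄)`.
-/

section Twist

variable {R D : Type*} [Ring R] [Ring D] (π : R →+* D)

theorem map_eq_of_mul_eq_mul_right (hker : ∀ z, z ∈ nonunits R → π z = 0)
    {a b x : R} (hx : x ≠ 0) (h : a * x = b * x) : π a = π b := by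
  rw [← sub_eq_zero, ← map_sub]
  by_contra hne
  obtain ⟨v, hv⟩ : IsUnit (a - b) := not_not.mp fun hn => hne (hker _ hn)
  apply hx
  calc x = ↑v⁻¹ * ((a - b) * x) := by rw [← mul_assoc, ← hv, Units.inv_mul, one_mul]
    _ = 0 := by rw [sub_mul, h, sub_self, mul_zero]

theorem map_eq_twist_of_mul_eq (hπ : Function.Surjective π)
    (hker : ∀ z, z ∈ nonunits R → π z = 0) {x : R} (hx : x ≠ 0) {σ : D → D}
    (hσ : ∀ t s : R, π s = σ (π t) → x * t = s * x) {t s : R} (h : x * t = s * x) :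
    π s = σ (π t) := by
  obtain ⟨s₀, hs₀⟩ := hπ (σ (π t))
  rw [← hs₀]
  exact map_eq_of_mul_eq_mul_right π hker hx (h.symm.trans (hσ t s₀ hs₀))

theorem twist_mul_map_eq_map_mul_twist (hπ : Function.Surjective π)
    (hker : ∀ z, z ∈ nonunits R → π z = 0) {x c : R} (hx : x ≠ 0) (σx σy : D ≃+* D)
    (hσx : ∀ t s : R, π s = σx (π t) → x * t = s * x)
    (hσy : ∀ t s : R, π s = σy (π t) → x * c * t = s * (x * c)) (t : D) :
    σy t * σx (π c) = σx (π c) * σx t := by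
  obtain ⟨t, rfl⟩ := hπ t
  obtain ⟨s', hs'⟩ := hπ (σy (π t))
  obtain ⟨u, hu⟩ := hπ (σx (π c))
  have hxct : x * (c * t) = s' * u * x := by
    rw [← mul_assoc, hσy t s' hs', hσx c u hu, mul_assoc]
  calc σy (π t) * σx (π c) = π (s' * u) := by rw [map_mul, hs', hu]
    _ = σx (π (c * t)) := map_eq_twist_of_mul_eq π hπ hker hx hσx hxct
    _ = σx (π c) * σx (π t) := by rw [map_mul, map_mul]

end Twist

theorem residue_automorphisms_conjugate_general
    {R : Type*} [Ring R]
    {D : Type*} [DivisionRing D] (π : R →+* D) (hπ : Function.Surjective π)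
    (hker : ∀ r : R, π r = 0 ↔ r ∈ nonunits R)
    (x y : R) (hx0 : x ≠ 0)
    (r : D) (rlift : R) (hrlift : π rlift = r) (hrunit : IsUnit rlift)
    (hxy : y = x * rlift)
    (σx σy : D ≃+* D)
    (hσx : ∀ t s : R, π s = σx (π t) → x * t = s * x)
    (hσy : ∀ t s : R, π s = σy (π t) → y * t = s * y) :
    (∀ t : D, σy t = σx r * σx t * (σx r)⁻¹) ∧
      ((∀ a b : D, a * b = b * a) → σx = σy) := by
  subst hxy hrlift
  have hσr : σx (π rlift) ≠ 0 := by
    simpa using (hrunit.map π).ne_zero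
  have hconj (t : D) : σy t = σx (π rlift) * σx t * (σx (π rlift))⁻¹ := by
    rw [eq_mul_inv_iff_mul_eq₀ hσr]
    exact twist_mul_map_eq_map_mul_twist π hπ (fun z => (hker z).mpr) hx0 σx σy hσx hσy t
  refine ⟨hconj, fun hcomm => RingEquiv.ext fun t => ?_⟩
  rw [hconj, hcomm (σx _), mul_inv_cancel_right₀ hσr]

/-- Let `R` be a local ring with maximal ideal `m` (the nonunits) satisfying `m² = 0`
and `m = Rx = xR` for every nonzero `x ∈ m`, and let `D` be the residue skew field
`d = R/m` (a division ring with surjection `π : R → D` with kernel `m`).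
If `x, y` are nonzero elements of `m` with `y = x * r̃` for a unit `r̃` lifting
`r ∈ d`, and `σx, σy` are the automorphisms of `d` defined by `x·t̃ = σx(t)~·x`
(resp. for `y`), then `σy(t) = σx(r) * σx(t) * σx(r)⁻¹` for all `t ∈ d`.
In particular, if `d` is commutative then `σx = σy`. -/
theorem residue_automorphisms_conjugate
    {R : Type*} [Ring R] [IsLocalRing R]
    (hsq : ∀ a b : R, a ∈ nonunits R → b ∈ nonunits R → a * b = 0)
    (hgen : ∀ x : R, x ∈ nonunits R → x ≠ 0 →
      (∀ a : R, a ∈ nonunits R ↔ ∃ r : R, a = r * x) ∧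
      (∀ a : R, a ∈ nonunits R ↔ ∃ r : R, a = x * r))
    {D : Type*} [DivisionRing D] (π : R →+* D) (hπ : Function.Surjective π)
    (hker : ∀ r : R, π r = 0 ↔ r ∈ nonunits R)
    (x y : R) (hx : x ∈ nonunits R) (hx0 : x ≠ 0)
    (hy : y ∈ nonunits R) (hy0 : y ≠ 0)
    (r : D) (rlift : R) (hrlift : π rlift = r) (hrunit : IsUnit rlift)
    (hxy : y = x * rlift)
    (σx σy : D ≃+* D)
    (hσx : ∀ t s : R, π s = σx (π t) → x * t = s * x)
    (hσy : ∀ t s : R, π s = σy (π t) → y * t = s * y) :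
    (∀ t : D, σy t = σx r * σx t * (σx r)⁻¹) ∧
      ((∀ a b : D, a * b = b * a) → σx = σy) :=
  residue_automorphisms_conjugate_general π hπ hker x y hx0 r rlift hrlift hrunit hxy σx σy hσx hσy
end
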